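/- Let A•, B•, C•, D• be four graded objects in an abelian category, with degree-one maps a, b, c, d (not assumed to square to zero), together with maps h : A• → B•, g : B• → C•, f : C• → D• commuting with them, such that at each degree n the column A^n → B^n → C^n → D^n is exact except possibly at D^n. Suppose further one is given 'homotopy correction' maps ζₙ : D^n → C^{n+2}, δₙ : C^n → B^{n+2}, εₙ : D^n → B^{n+3}, αₙ : B^n → A^{n+2}, βₙ : C^n → A^{n+3}, γₙ : D^n → A^{n+4} satisfying f∘ζₙ = d∘d, g∘δₙ = c∘c − ζ∘f, g∘εₙ = c∘ζ − ζ∘d, h∘αₙ = b∘b − δ∘g, h∘βₙ = b∘δ − δ∘c + ε∘f, h∘γₙ = b∘ε − δ∘ζ + ε∘d (with the index conventions of the statement). Then the maps Dₙ : A^{n+3} ⊕ B^{n+2} ⊕ C^{n+1} ⊕ D^n → A^{n+4} ⊕ B^{n+3} ⊕ C^{n+2} ⊕ D^{n+1} given by the block matrix with rows (a, (−1)ⁿα, β, (−1)ⁿγ), ((−1)ⁿh, b, (−1)ⁿδ, ε), (0, (−1)ⁿg, c, (−1)ⁿζ), (0, 0, (−1)ⁿf, d) satisfy D_{n+1} ∘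 Dₙ = 0, i.e., (A^{•+3} ⊕ B^{•+2} ⊕ C^{•+1} ⊕ D^•, D) is a cochain complex. -/
import Mathlib


/-- The sign (−1)ⁿ for n : ℤ. -/
def sgn (n : ℤ) : ℤ := if Even n then 1 else -1

set_option maxHeartbeats 1600000 in
/-- Four cochain complexes A•, B•, C•, D• of abelian groups with chain maps
h : A• → B•, g : B• → C•, f : C• → D• forming a commutative ladder whose
columns A^n → B^n → C^n → D^n are exact except possibly at D^n, together with
correction maps ζ, δ, ε, α, β, γ satisfying
f∘ζₙ = d∘d, g∘δₙ = c∘c − ζ∘f, g∘εₙ = c∘ζ − ζ∘d,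
h∘αₙ = b∘b − δ∘g, h∘βₙ = b∘δ − δ∘c + ε∘f, h∘γₙ = b∘ε − δ∘ζ + ε∘d,
assemble into a total complex with terms A^{n+3} ⊕ B^{n+2} ⊕ C^{n+1} ⊕ D^n and
block differential with rows (a, (−1)ⁿα, β, (−1)ⁿγ), ((−1)ⁿh, b, (−1)ⁿδ, ε),
(0, (−1)ⁿg, c, (−1)ⁿζ), (0, 0, (−1)ⁿf, d): the block differential squares to
zero. -/
theorem total_complex_of_four_row_ladder
    {A B C D : ℤ → Type*}
    [∀ n, AddCommGroup (A n)] [∀ n, AddCommGroup (B n)]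
    [∀ n, AddCommGroup (C n)] [∀ n, AddCommGroup (D n)]
    -- horizontal differentials
    (da : ∀ n, A n →+ A (n + 1)) (db : ∀ n, B n →+ B (n + 1))
    (dc : ∀ n, C n →+ C (n + 1)) (dd : ∀ n, D n →+ D (n + 1))
    -- vertical chain maps
    (h : ∀ n, A n →+ B n) (g : ∀ n, B n →+ C n) (f : ∀ n, C n →+ D n)
    (hcomm₁ : ∀ n, (db n).comp (h n) = (h (n + 1)).comp (da n))
    (hcomm₂ : ∀ n, (dc n).comp (g n) = (g (n + 1)).comp (db n))
    (hcomm₃ : ∀ n, (dd n).comp (f n) = (f (n + 1)).comp (dc n))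
    -- columns exact except possibly at the last position
    (hinj : ∀ n, Function.Injective (h n))
    (hex₁ : ∀ n, (h n).range = (g n).ker)
    (hex₂ : ∀ n, (g n).range = (f n).ker)
    -- correction maps
    (ζ : ∀ n, D n →+ C (n + 1 + 1))
    (δ : ∀ n, C n →+ B (n + 1 + 1))
    (ε : ∀ n, D n →+ B (n + 1 + 1 + 1))
    (α : ∀ n, B n →+ A (n + 1 + 1))
    (β : ∀ n, C n →+ A (n + 1 + 1 + 1))
    (γ : ∀ n, D n →+ A (n + 1 + 1 + 1 + 1))
    (hζ : ∀ n, (f (n + 1 + 1)).comp (ζ n) = (dd (n + 1)).comp (dd n))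
    (hδ : ∀ n, (g (n + 1 + 1)).comp (δ n) =
      (dc (n + 1)).comp (dc n) - (ζ n).comp (f n))
    (hε : ∀ n, (g (n + 1 + 1 + 1)).comp (ε n) =
      (dc (n + 1 + 1)).comp (ζ n) - (ζ (n + 1)).comp (dd n))
    (hα : ∀ n, (h (n + 1 + 1)).comp (α n) =
      (db (n + 1)).comp (db n) - (δ n).comp (g n))
    (hβ : ∀ n, (h (n + 1 + 1 + 1)).comp (β n) =
      (db (n + 1 + 1)).comp (δ n) - (δ (n + 1)).comp (dc n) + (ε n).comp (f n))
    (hγ : ∀ n, (h (n + 1 + 1 + 1 + 1)).comp (γ n) =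
      (db (n + 1 + 1 + 1)).comp (ε n) - (δ (n + 1 + 1)).comp (ζ n) +
        (ε (n + 1)).comp (dd n)) :
    ∀ (n : ℤ) (w : A (n + 1 + 1 + 1)) (x : B (n + 1 + 1)) (y : C (n + 1))
      (z : D n),
      -- one application of the block differential
      let w' : A (n + 1 + 1 + 1 + 1) :=
        da (n + 1 + 1 + 1) w + sgn n • α (n + 1 + 1) x + β (n + 1) y +
          sgn n • γ n z
      let x' : B (n + 1 + 1 + 1) :=
        sgn n • h (n + 1 + 1 + 1) w + db (n + 1 + 1) x + sgn n • δ (n + 1) y +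
          ε n z
      let y' : C (n + 1 + 1) :=
        sgn n • g (n + 1 + 1) x + dc (n + 1) y + sgn n • ζ n z
      let z' : D (n + 1) := sgn n • f (n + 1) y + dd n z
      -- applying it a second time gives zero in each component
      (da (n + 1 + 1 + 1 + 1) w' + sgn (n + 1) • α (n + 1 + 1 + 1) x' +
        β (n + 1 + 1) y' + sgn (n + 1) • γ (n + 1) z' = 0) ∧
      (sgn (n + 1) • h (n + 1 + 1 + 1 + 1) w' + db (n + 1 + 1 + 1) x' +
        sgn (n + 1) • δ (n + 1 + 1) y' + ε (n + 1) z' = 0) ∧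
      (sgn (n + 1) • g (n + 1 + 1 + 1) x' + dc (n + 1 + 1) y' +
        sgn (n + 1) • ζ (n + 1) z' = 0) ∧
      (sgn (n + 1) • f (n + 1 + 1) y' + dd (n + 1) z' = 0) := by
  -- pointwise versions of all hypotheses
  have P1 : ∀ (m : ℤ) (u : A m), h (m + 1) (da m u) = db m (h m u) := fun m u => by
    have := DFunLike.congr_fun (hcomm₁ m) u
    simp only [AddMonoidHom.comp_apply] at this
    exact this.symm
  have P2 : ∀ (m : ℤ) (u : B m), g (m + 1) (db m u) = dc m (g m u) := fun m u => by
    have := DFunLike.congr_fun (hcomm₂ m) u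
    simp only [AddMonoidHom.comp_apply] at this
    exact this.symm
  have P3 : ∀ (m : ℤ) (u : C m), f (m + 1) (dc m u) = dd m (f m u) := fun m u => by
    have := DFunLike.congr_fun (hcomm₃ m) u
    simp only [AddMonoidHom.comp_apply] at this
    exact this.symm
  have Z1 : ∀ (m : ℤ) (u : A m), g m (h m u) = 0 := fun m u => by
    have hm : h m u ∈ (g m).ker := by
      rw [← hex₁ m]; exact ⟨u, rfl⟩
    exact AddMonoidHom.mem_ker.mp hm
  have Z2 : ∀ (m : ℤ) (u : B m), f m (g m u) = 0 := fun m u => by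
    have hm : g m u ∈ (f m).ker := by
      rw [← hex₂ m]; exact ⟨u, rfl⟩
    exact AddMonoidHom.mem_ker.mp hm
  have Rζ : ∀ (m : ℤ) (u : D m), f (m + 1 + 1) (ζ m u) = dd (m + 1) (dd m u) := fun m u => by
    have := DFunLike.congr_fun (hζ m) u
    simpa only [AddMonoidHom.comp_apply] using this
  have Rδ : ∀ (m : ℤ) (u : C m),
      g (m + 1 + 1) (δ m u) = dc (m + 1) (dc m u) - ζ m (f m u) := fun m u => by
    have := DFunLike.congr_fun (hδ m) u
    simpa only [AddMonoidHom.comp_apply, AddMonoidHom.sub_apply] using this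
  have Rε : ∀ (m : ℤ) (u : D m),
      g (m + 1 + 1 + 1) (ε m u) = dc (m + 1 + 1) (ζ m u) - ζ (m + 1) (dd m u) := fun m u => by
    have := DFunLike.congr_fun (hε m) u
    simpa only [AddMonoidHom.comp_apply, AddMonoidHom.sub_apply] using this
  have Rα : ∀ (m : ℤ) (u : B m),
      h (m + 1 + 1) (α m u) = db (m + 1) (db m u) - δ m (g m u) := fun m u => by
    have := DFunLike.congr_fun (hα m) u
    simpa only [AddMonoidHom.comp_apply, AddMonoidHom.sub_apply] using this
  have Rβ : ∀ (m : ℤ) (u : C m),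
      h (m + 1 + 1 + 1) (β m u) =
        db (m + 1 + 1) (δ m u) - δ (m + 1) (dc m u) + ε m (f m u) := fun m u => by
    have := DFunLike.congr_fun (hβ m) u
    simpa only [AddMonoidHom.comp_apply, AddMonoidHom.sub_apply,
      AddMonoidHom.add_apply] using this
  have Rγ : ∀ (m : ℤ) (u : D m),
      h (m + 1 + 1 + 1 + 1) (γ m u) =
        db (m + 1 + 1 + 1) (ε m u) - δ (m + 1 + 1) (ζ m u) + ε (m + 1) (dd m u) := fun m u => by
    have := DFunLike.congr_fun (hγ m) u
    simpa only [AddMonoidHom.comp_apply, AddMonoidHom.sub_apply,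
      AddMonoidHom.add_apply] using this
  intro n w x y z
  rcases Int.even_or_odd n with hn | hn
  · have hs1 : sgn n = 1 := if_pos hn
    have hs2 : sgn (n + 1) = -1 := if_neg (by simp [Int.even_add_one, hn])
    simp only [hs1, hs2, one_smul, neg_one_zsmul]
    refine ⟨?_, ?_, ?_, ?_⟩
    · apply hinj (n + 1 + 1 + 1 + 1 + 1)
      rw [map_zero]
      simp only [map_add, map_neg, map_sub, map_zero, P1, P2, P3, Z1, Z2, Rζ, Rδ, Rε, Rα, Rβ, Rγ]
      abel
    · simp only [map_add, map_neg, map_sub, map_zero, P1, P2, P3, Z1, Z2, Rζ, Rδ, Rε, Rα, Rβ, Rγ]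
      abel
    · simp only [map_add, map_neg, map_sub, map_zero, P1, P2, P3, Z1, Z2, Rζ, Rδ, Rε, Rα, Rβ, Rγ]
      abel
    · simp only [map_add, map_neg, map_sub, map_zero, P1, P2, P3, Z1, Z2, Rζ, Rδ, Rε, Rα, Rβ, Rγ]
      abel
  · have hs1 : sgn n = -1 := if_neg (by simp [Int.not_even_iff_odd, hn])
    have hs2 : sgn (n + 1) = 1 := if_pos (by simp [Int.even_add_one, Int.not_even_iff_odd, hn])
    simp only [hs1, hs2, one_smul, neg_one_zsmul]
    refine ⟨?_, ?_, ?_, ?_⟩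
    · apply hinj (n + 1 + 1 + 1 + 1 + 1)
      rw [map_zero]
      simp only [map_add, map_neg, map_sub, map_zero, P1, P2, P3, Z1, Z2, Rζ, Rδ, Rε, Rα, Rβ, Rγ]
      abel
    · simp only [map_add, map_neg, map_sub, map_zero, P1, P2, P3, Z1, Z2, Rζ, Rδ, Rε, Rα, Rβ, Rγ]
      abel
    · simp only [map_add, map_neg, map_sub, map_zero, P1, P2, P3, Z1, Z2, Rζ, Rδ, Rε, Rα, Rβ, Rγ]
      abel
    · simp only [map_add, map_neg, map_sub, map_zero, P1, P2, P3, Z1, Z2, Rζ, Rδ, Rε, Rα, Rβ, Rγ]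
      abel
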